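/- Let σ > 0, α > 0, ρ ∈ (−1, 1), and β ∈ [0, 1]. For (u, v) ∈ (0, ∞)² let C(u, v) be the 2×2 matrix with entries C₁₁ = σ² v² u^{2β}, C₁₂ = C₂₁ = ρ σ α v² u^{β}, C₂₂ = α² v² (the SABR covariance matrix). Then there is no C³ function φ : (0, ∞)² → ℝ such that for all (u, v) ∈ (0, ∞)², the Hessian matrix of φ at (u, v) equals C(u, v)⁻¹. -/

import Mathlib

/-- The Hessian matrix of `φ : ℝ × ℝ → ℝ` at `p`, via iterated Fréchet derivatives. -/
noncomputable def hess2d (φ : ℝ × ℝ → ℝ) (p : ℝ × ℝ) : Matrix (Fin 2) (Fin 2) ℝ :=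
  !![fderiv ℝ (fun q => fderiv ℝ φ q ((1 : ℝ), (0 : ℝ))) p ((1 : ℝ), (0 : ℝ)),
     fderiv ℝ (fun q => fderiv ℝ φ q ((1 : ℝ), (0 : ℝ))) p ((0 : ℝ), (1 : ℝ));
     fderiv ℝ (fun q => fderiv ℝ φ q ((0 : ℝ), (1 : ℝ))) p ((1 : ℝ), (0 : ℝ)),
     fderiv ℝ (fun q => fderiv ℝ φ q ((0 : ℝ), (1 : ℝ))) p ((0 : ℝ), (1 : ℝ))]

/-- The SABR covariance matrix at `(u, v) = p`. -/
noncomputable def sabrCov (σ α ρ β : ℝ) (p : ℝ × ℝ) : Matrix (Fin 2) (Fin 2) ℝ :=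
  !![σ ^ 2 * p.2 ^ 2 * p.1 ^ (2 * β), ρ * σ * α * p.2 ^ 2 * p.1 ^ β;
     ρ * σ * α * p.2 ^ 2 * p.1 ^ β, α ^ 2 * p.2 ^ 2]

/-!
The inverse covariance has the form `H(u, v) = M(u) / v²`. If `H` were the Hessian of a `C²`
function `φ`, then for each row `i` the function `∂ᵢφ` would have `∂ᵥ∂ᵢφ = Hᵢ₂` and
`∂ᵤ∂ᵢφ = Hᵢ₁`; by the mean value theorem, whenever `Hᵢ₂` does not depend on `u`, `Hᵢ₁` cannot
depend on `v`. Row 2 (`H₂₂ = M₂₂ / v²`) then forces `H₂₁ = -ρ / (σα(1-ρ²) v² u^β)` to be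
independent of `v`, so `ρ = 0`; but then `H₁₂ = 0` and row 1 forces
`H₁₁ = 1 / (σ²(1-ρ²) v² u^{2β})` to be independent of `v`, which it is not.
-/

open Set

section Partials

variable {E : Type*} [NormedAddCommGroup E] [NormedSpace ℝ E] {g : ℝ × ℝ → E}

theorem DifferentiableAt.hasDerivAt_comp_prodMk_left {u v : ℝ} (hg : DifferentiableAt ℝ g (u, v)) :
    HasDerivAt (fun s => g (s, v)) (fderiv ℝ g (u, v) (1, 0)) u :=
  hg.hasFDerivAt.comp_hasDerivAt u ((hasDerivAt_id u).prodMk (hasDerivAt_const u v))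

theorem DifferentiableAt.hasDerivAt_comp_prodMk_right {u v : ℝ} (hg : DifferentiableAt ℝ g (u, v)) :
    HasDerivAt (fun t => g (u, t)) (fderiv ℝ g (u, v) (0, 1)) v :=
  hg.hasFDerivAt.comp_hasDerivAt v ((hasDerivAt_const v u).prodMk (hasDerivAt_id v))

theorem sub_eq_sub_of_hasDerivAt_right {B : ℝ → E}
    (hB : ∀ u > 0, ∀ v > 0, HasDerivAt (fun t => g (u, t)) (B v) v)
    {u₁ u₂ v₁ v₂ : ℝ} (hu₁ : 0 < u₁) (hu₂ : 0 < u₂) (hv₁ : 0 < v₁) (hv₂ : 0 < v₂) :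
    g (u₁, v₂) - g (u₁, v₁) = g (u₂, v₂) - g (u₂, v₁) := by
  have hderiv : ∀ t > 0, HasDerivAt (fun t => g (u₁, t) - g (u₂, t)) 0 t := fun t ht => by
    simpa using (hB u₁ hu₁ t ht).fun_sub (hB u₂ hu₂ t ht)
  exact sub_eq_sub_iff_sub_eq_sub.1 <| isOpen_Ioi.is_const_of_deriv_eq_zero isPreconnected_Ioi
    (fun t ht => (hderiv t ht).differentiableAt.differentiableWithinAt)
    (fun t ht => (hderiv t ht).deriv) hv₂ hv₁

theorem eq_of_hasDerivAt_left_of_hasDerivAt_right {A : ℝ → ℝ → E} {B : ℝ → E}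
    (hA : ∀ u > 0, ∀ v > 0, HasDerivAt (fun s => g (s, v)) (A u v) u)
    (hB : ∀ u > 0, ∀ v > 0, HasDerivAt (fun t => g (u, t)) (B v) v)
    {u v₁ v₂ : ℝ} (hu : 0 < u) (hv₁ : 0 < v₁) (hv₂ : 0 < v₂) : A u v₁ = A u v₂ := by
  have hconst : (fun s => g (s, v₂) - g (s, v₁)) =ᶠ[nhds u] fun _ => g (u, v₂) - g (u, v₁) :=
    Filter.eventually_of_mem (Ioi_mem_nhds hu) fun s hs =>
      sub_eq_sub_of_hasDerivAt_right hB hs hu hv₁ hv₂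
  have hderiv := ((hA u hu v₂ hv₂).fun_sub (hA u hu v₁ hv₁)).congr_of_eventuallyEq hconst.symm
  exact (sub_eq_zero.1 (hderiv.unique (hasDerivAt_const u _))).symm

end Partials

theorem ContDiffOn.differentiableAt_fderiv_apply {E F : Type*} [NormedAddCommGroup E]
    [NormedSpace ℝ E] [NormedAddCommGroup F] [NormedSpace ℝ F] {φ : E → F} {s : Set E}
    {n : WithTop ℕ∞} (hφ : ContDiffOn ℝ n φ s) (hn : 2 ≤ n) (hs : IsOpen s) (w : E) {p : E}
    (hp : p ∈ s) : DifferentiableAt ℝ (fun q => fderiv ℝ φ q w) p :=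
  (((hφ.fderiv_of_isOpen (m := 1) hs (le_trans (by norm_num) hn)).clm_apply
    contDiffOn_const).differentiableOn one_ne_zero).differentiableAt (hs.mem_nhds hp)

theorem hess2d_apply (φ : ℝ × ℝ → ℝ) (p : ℝ × ℝ) (i j : Fin 2) :
    hess2d φ p i j =
      fderiv ℝ (fun q => fderiv ℝ φ q (![(1, 0), (0, 1)] i)) p (![(1, 0), (0, 1)] j) := by
  fin_cases i <;> fin_cases j <;> rfl

theorem hess2d_apply_zero_eq_of_apply_one_eq {φ : ℝ × ℝ → ℝ}
    (hφ : ContDiffOn ℝ 2 φ (Ioi 0 ×ˢ Ioi 0)) (i : Fin 2) {B : ℝ → ℝ}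
    (hB : ∀ u > 0, ∀ v > 0, hess2d φ (u, v) i 1 = B v) {u v₁ v₂ : ℝ} (hu : 0 < u)
    (hv₁ : 0 < v₁) (hv₂ : 0 < v₂) : hess2d φ (u, v₁) i 0 = hess2d φ (u, v₂) i 0 := by
  set g := fun q => fderiv ℝ φ q (![(1, 0), (0, 1)] i)
  have hg : ∀ u > 0, ∀ v > 0, DifferentiableAt ℝ g (u, v) := fun u hu v hv =>
    hφ.differentiableAt_fderiv_apply le_rfl (isOpen_Ioi.prod isOpen_Ioi) _ ⟨hu, hv⟩
  simp only [hess2d_apply] at hB ⊢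
  exact eq_of_hasDerivAt_left_of_hasDerivAt_right (g := g)
    (fun u hu v hv => (hg u hu v hv).hasDerivAt_comp_prodMk_left)
    (fun u hu v hv => hB u hu v hv ▸ (hg u hu v hv).hasDerivAt_comp_prodMk_right) hu hv₁ hv₂

theorem sabrCov_inv {σ α ρ β u v : ℝ} (hσ : σ ≠ 0) (hα : α ≠ 0) (hρ : 1 - ρ ^ 2 ≠ 0)
    (hu : 0 < u) (hv : v ≠ 0) :
    (sabrCov σ α ρ β (u, v))⁻¹ =
      !![1 / (σ ^ 2 * (1 - ρ ^ 2) * v ^ 2 * u ^ (2 * β)),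
         -ρ / (σ * α * (1 - ρ ^ 2) * v ^ 2 * u ^ β);
         -ρ / (σ * α * (1 - ρ ^ 2) * v ^ 2 * u ^ β),
         1 / (α ^ 2 * (1 - ρ ^ 2) * v ^ 2)] := by
  have hpow : u ^ β ≠ 0 := (Real.rpow_pos_of_pos hu β).ne'
  have hpow_two : u ^ (2 * β) = u ^ β * u ^ β := by rw [two_mul, Real.rpow_add hu]
  refine Matrix.inv_eq_right_inv ?_
  ext i j
  fin_cases i <;> fin_cases j <;>
    · simp [sabrCov, Matrix.mul_apply, Fin.sum_univ_two, hpow_two]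
      field_simp
      ring

theorem sabr_not_hessian_martingale_general (σ α ρ β : ℝ)
    (hσ : 0 < σ) (hα : 0 < α) (hρ₁ : -1 < ρ) (hρ₂ : ρ < 1) :
    ¬ ∃ φ : ℝ × ℝ → ℝ,
      ContDiffOn ℝ 3 φ {p : ℝ × ℝ | 0 < p.1 ∧ 0 < p.2} ∧
      ∀ p ∈ {p : ℝ × ℝ | 0 < p.1 ∧ 0 < p.2},
        hess2d φ p = (sabrCov σ α ρ β p)⁻¹ := by
  rintro ⟨φ, hφ, hH⟩
  have hρ : 1 - ρ ^ 2 ≠ 0 := by nlinarith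
  have hφ₂ : ContDiffOn ℝ 2 φ (Ioi 0 ×ˢ Ioi 0) := hφ.of_le (by norm_num)
  have hess := fun u (hu : 0 < u) v (hv : 0 < v) =>
    (hH (u, v) ⟨hu, hv⟩).trans (sabrCov_inv hσ.ne' hα.ne' hρ hu hv.ne')
  by_cases hρ0 : ρ = 0
  · have h := hess2d_apply_zero_eq_of_apply_one_eq hφ₂ 0 (B := fun _ => 0)
      (fun u hu v hv => by simp [hess u hu v hv, hρ0]) one_pos one_pos two_pos
    simp [hess, hρ0] at h
    field_simp at h
    norm_num at h
  · have h := hess2d_apply_zero_eq_of_apply_one_eq hφ₂ 1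
      (B := fun v => 1 / (α ^ 2 * (1 - ρ ^ 2) * v ^ 2))
      (fun u hu v hv => by simp [hess u hu v hv]) one_pos one_pos two_pos
    simp [hess] at h
    field_simp at h
    norm_num at h

/-- Appendix D.2: SABR is not a Hessian martingale. There is no `C³`
function `φ` on `(0,∞)²` whose Hessian equals the inverse of the SABR covariance matrix
everywhere on `(0,∞)²`. -/
theorem sabr_not_hessian_martingale (σ α ρ β : ℝ)
    (hσ : 0 < σ) (hα : 0 < α) (hρ₁ : -1 < ρ) (hρ₂ : ρ < 1)
    (hβ₀ : 0 ≤ β) (hβ₁ : β ≤ 1) :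
    ¬ ∃ φ : ℝ × ℝ → ℝ,
      ContDiffOn ℝ 3 φ {p : ℝ × ℝ | 0 < p.1 ∧ 0 < p.2} ∧
      ∀ p ∈ {p : ℝ × ℝ | 0 < p.1 ∧ 0 < p.2},
        hess2d φ p = (sabrCov σ α ρ β p)⁻¹ :=
  sabr_not_hessian_martingale_general σ α ρ β hσ hα hρ₁ hρ₂
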